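/- arXiv:2001.01881 — 2 statements merged into one kernel-verified Lean document; each statement's English description precedes it below -/
import Mathlib

section
/- Let (f_i) be a sequence of continuous real-valued functions on Cantor space that is rapidly L¹-Cauchy with respect to the fair-coin measure μ. For each n, define A_n = {x ∈ 2^ω : ∃N ≥ 2n+1, ∑_{i=2n+1}^{N} |f_i(x) − f_{i+1}(x)| > 2^{-n}}, and for each k let B_k = 2^ω \ ⋃_{n≥k} A_n. Then on each set B_k the sequence (f_i) converges uniformly with an explicit modulus: for every x ∈ B_k the limit f(x) = lim_i f_i(x) exists, and for all ℓ and all m > 2·max(ℓ, k), |f_m(x) − f(x)| ≤ 2^{-ℓ}. -/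
open MeasureTheory Filter Topology

/-- The cylinder `[p]` determined by a finite binary string `p`. -/
def cylinder (p : List Bool) : Set (ℕ → Bool) :=
  {x | ∀ i, (h : i < p.length) → x i = p.get ⟨i, h⟩}

/-- `μ` is the fair-coin measure on Cantor space `2^ω = ℕ → Bool`. -/
def IsFairCoin (μ : Measure (ℕ → Bool)) : Prop :=
  IsProbabilityMeasure μ ∧ ∀ p : List Bool, μ (cylinder p) = 2⁻¹ ^ p.length

/-! On `B k` every tail sum `∑_{i ≥ 2n+1} |f_i x - f_{i+1} x|` with `n ≥ k` is at most `2^{-n}`.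
Hence the sequence of increments is summable, `(f_i x)` is Cauchy, and the distance from `f_m x`
to the limit is bounded by the tail sum starting at `m`, i.e. by `2^{-n}` as soon as `m ≥ 2n + 1`. -/

open Finset

section TailSums

variable {d : ℕ → ℝ} {a : ℕ} {c : ℝ}

theorem sum_range_add_le_of_sum_Icc_le (hd : ∀ i, 0 ≤ d i) (h : ∀ N, ∑ i ∈ Icc a N, d i ≤ c)
    {m : ℕ} (hm : a ≤ m) (N : ℕ) : ∑ i ∈ range N, d (m + i) ≤ c :=
  calc ∑ i ∈ range N, d (m + i) = ∑ i ∈ Ico m (m + N), d i := by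
        rw [sum_Ico_eq_sum_range, Nat.add_sub_cancel_left]
    _ ≤ ∑ i ∈ Icc a (m + N), d i :=
        sum_le_sum_of_subset_of_nonneg (fun i hi => by simp only [mem_Ico, mem_Icc] at hi ⊢; omega)
          (fun i _ _ => hd i)
    _ ≤ c := h _

theorem summable_of_sum_Icc_le (hd : ∀ i, 0 ≤ d i) (h : ∀ N, ∑ i ∈ Icc a N, d i ≤ c) :
    Summable d := by
  rw [← summable_nat_add_iff a]
  refine summable_of_sum_range_le (c := c) (fun i => hd _) fun N => ?_
  simpa only [add_comm] using sum_range_add_le_of_sum_Icc_le hd h le_rfl N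

end TailSums

section Metric

variable {α : Type*} [PseudoMetricSpace α] {g : ℕ → α} {a : ℕ} {c : ℝ}

theorem exists_tendsto_of_sum_Icc_dist_le [CompleteSpace α]
    (h : ∀ N, ∑ i ∈ Icc a N, dist (g i) (g (i + 1)) ≤ c) : ∃ L, Tendsto g atTop (𝓝 L) :=
  cauchySeq_tendsto_of_complete <|
    cauchySeq_of_summable_dist (summable_of_sum_Icc_le (fun _ => dist_nonneg) h)

theorem dist_le_of_sum_Icc_dist_le (h : ∀ N, ∑ i ∈ Icc a N, dist (g i) (g (i + 1)) ≤ c)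
    {L : α} (hL : Tendsto g atTop (𝓝 L)) {m : ℕ} (hm : a ≤ m) : dist (g m) L ≤ c :=
  (dist_le_tsum_dist_of_tendsto (summable_of_sum_Icc_le (fun _ => dist_nonneg) h) hL m).trans <|
    Real.tsum_le_of_sum_range_le (fun _ => dist_nonneg)
      (sum_range_add_le_of_sum_Icc_le (fun _ => dist_nonneg) h hm)

end Metric

theorem stmt2_general (f : ℕ → (ℕ → Bool) → ℝ)
    (A : ℕ → Set (ℕ → Bool))
    (hA : ∀ n, A n = {x | ∃ N ≥ 2 * n + 1,
      (∑ i ∈ Finset.Icc (2 * n + 1) N, |f i x - f (i + 1) x|) > (2 : ℝ)⁻¹ ^ n})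
    (B : ℕ → Set (ℕ → Bool))
    (hB : ∀ k, B k = (⋃ n, ⋃ _ : n ≥ k, A n)ᶜ) :
    ∀ k, ∀ x ∈ B k, ∃ L : ℝ, Tendsto (fun i => f i x) atTop (𝓝 L) ∧
      ∀ ℓ m : ℕ, m > 2 * max ℓ k → |f m x - L| ≤ (2 : ℝ)⁻¹ ^ ℓ := by
  intro k x hx
  have tail_le : ∀ n ≥ k, ∀ N,
      ∑ i ∈ Icc (2 * n + 1) N, dist (f i x) (f (i + 1) x) ≤ (2 : ℝ)⁻¹ ^ n := by
    intro n hn N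
    have hxA : x ∉ A n := fun hxA => (hB k ▸ hx) (Set.mem_biUnion hn hxA)
    simp only [hA, Set.mem_ofPred_eq, not_exists, not_and, not_lt] at hxA
    rcases le_or_gt (2 * n + 1) N with hN | hN
    · exact hxA N hN
    · rw [Icc_eq_empty_of_lt hN, sum_empty]
      positivity
  obtain ⟨L, hL⟩ := exists_tendsto_of_sum_Icc_dist_le (tail_le k le_rfl)
  refine ⟨L, hL, fun ℓ m hm => ?_⟩
  calc |f m x - L| = dist (f m x) L := (Real.dist_eq _ _).symm
    _ ≤ (2 : ℝ)⁻¹ ^ max ℓ k := dist_le_of_sum_Icc_dist_le (tail_le _ (le_max_right ℓ k)) hL hm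
    _ ≤ (2 : ℝ)⁻¹ ^ ℓ := pow_le_pow_of_le_one (by norm_num) (by norm_num) (le_max_left ℓ k)

theorem stmt2 (μ : Measure (ℕ → Bool)) (hμ : IsFairCoin μ)
    (f : ℕ → (ℕ → Bool) → ℝ) (hf : ∀ i, Continuous (f i))
    (hcauchy : ∀ i, ∫ x, |f i x - f (i + 1) x| ∂μ < (2 : ℝ)⁻¹ ^ i)
    (A : ℕ → Set (ℕ → Bool))
    (hA : ∀ n, A n = {x | ∃ N ≥ 2 * n + 1,
      (∑ i ∈ Finset.Icc (2 * n + 1) N, |f i x - f (i + 1) x|) > (2 : ℝ)⁻¹ ^ n})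
    (B : ℕ → Set (ℕ → Bool))
    (hB : ∀ k, B k = (⋃ n, ⋃ _ : n ≥ k, A n)ᶜ) :
    ∀ k, ∀ x ∈ B k, ∃ L : ℝ, Tendsto (fun i => f i x) atTop (𝓝 L) ∧
      ∀ ℓ m : ℕ, m > 2 * max ℓ k → |f m x - L| ≤ (2 : ℝ)⁻¹ ^ ℓ :=
  stmt2_general f A hA B hB
end

section
/- Let f be a bounded μ-integrable real-valued function on Cantor space. Then for μ^{⊗ℕ}-almost every sequence R = (R_j)_{j∈ℕ} of points of 2^ω the following holds: for every finite binary string p, the limit lim_{N→∞} (1/N) ∑_{j<N} f(p⌢R_j) exists and equals 2^{|p|} ∫_{[p]} f dμ (where p⌢R_j ∈ 2^ω is the concatenation of p with R_j); consequently, the functions g^i : 2^ω → ℝ defined by g^i(X) = lim_{N→∞} (1/N) ∑_{j<N} f((X↾i)⌢R_j) are well-defined for every i and every X, and g^i → f in the L¹ norm as i → ∞. -/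
/-!
Under `μ.map unpack = μ^{⊗ℕ}` the coordinates `R j` are i.i.d. with law `μ`, and `y ↦ p⌢y` pushes
`μ` forward to `2^{|p|} • μ|_{[p]}`, so the strong law of large numbers applied to `y ↦ f (p⌢y)`
gives the limit `2^{|p|} ∫_{[p]} f dμ`. Hence `g^i X` is the average of `f` over the atom of `X`
in the finite σ-algebra generated by the first `i` coordinates, i.e. a version of the conditional
expectation of `f` given that σ-algebra, and Lévy's upward theorem gives `g^i → f` in `L¹`.
-/

open MeasureTheory Filter Topology

/-- Splitting one fair-coin sequence into countably many independent ones via the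
pairing bijection `Nat.pair : ℕ × ℕ ≃ ℕ`.  If `μ` is the fair-coin measure on `2^ω`,
then `μ.map unpack` is exactly the countable product measure `μ^{⊗ℕ}` on `(2^ω)^ℕ`. -/
def unpack (x : ℕ → Bool) : ℕ → ℕ → Bool := fun j n => x (Nat.pair j n)

/-- The concatenation `p⌢y ∈ 2^ω` of a finite binary string `p` with `y ∈ 2^ω`. -/
def concatSeq (p : List Bool) (y : ℕ → Bool) : ℕ → Bool :=
  fun n => if h : n < p.length then p.get ⟨n, h⟩ else y (n - p.length)

/-- `X↾i`, the length-`i` initial segment of `X ∈ 2^ω`, as a finite binary string. -/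
def initSeg (x : ℕ → Bool) (i : ℕ) : List Bool := List.ofFn fun j : Fin i => x j

open ProbabilityTheory

section Sequences

variable {α : Type*} [MeasurableSpace α]

def truncate (n : ℕ) (x : ℕ → α) : Fin n → α := fun j => x j

def shift (n : ℕ) (x : ℕ → α) : ℕ → α := fun k => x (k + n)

@[fun_prop]
lemma measurable_truncate (n : ℕ) : Measurable (truncate (α := α) n) :=
  measurable_pi_lambda _ fun j => measurable_pi_apply (j : ℕ)

@[fun_prop]
lemma measurable_shift (n : ℕ) : Measurable (shift (α := α) n) :=
  measurable_pi_lambda _ fun k => measurable_pi_apply (k + n)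

def prefixFiltration : Filtration ℕ (MeasurableSpace.pi : MeasurableSpace (ℕ → α)) where
  seq n := MeasurableSpace.comap (truncate n) inferInstance
  mono' m n hmn := by
    have : truncate (α := α) m = (fun v j => v (Fin.castLE hmn j)) ∘ truncate n := rfl
    simp only [this, ← MeasurableSpace.comap_comp]
    exact MeasurableSpace.comap_mono
      (by fun_prop : Measurable fun (v : Fin n → α) j => v (Fin.castLE hmn j)).comap_le
  le' n := (measurable_truncate n).comap_le

lemma iSup_prefixFiltration : ⨆ n, prefixFiltration (α := α) n = MeasurableSpace.pi := by
  refine le_antisymm (iSup_le prefixFiltration.le) (iSup_le fun k => ?_)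
  have : (fun x : ℕ → α => x k) = (fun v => v (Fin.last k)) ∘ truncate (k + 1) := rfl
  rw [this, ← MeasurableSpace.comap_comp]
  exact le_iSup_of_le (k + 1) (MeasurableSpace.comap_mono (measurable_pi_apply _).comap_le)

lemma MeasureTheory.Measure.ext_of_map_truncate {μ ν : Measure (ℕ → α)} [IsFiniteMeasure μ]
    (h : ∀ n, μ.map (truncate n) = ν.map (truncate n)) : μ = ν := by
  have hgen : (MeasurableSpace.pi : MeasurableSpace (ℕ → α)) =
      .generateFrom {s | ∃ n, MeasurableSet[prefixFiltration n] s} := by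
    rw [Set.ofPred_exists,
      MeasurableSpace.generateFrom_iUnion_measurableSet (fun n => prefixFiltration (α := α) n),
      iSup_prefixFiltration]
  have hpi : IsPiSystem {s : Set (ℕ → α) | ∃ n, MeasurableSet[prefixFiltration n] s} := by
    rw [Set.ofPred_exists]
    exact isPiSystem_iUnion_of_monotone _
      (fun n ↦ @MeasurableSpace.isPiSystem_measurableSet _ (prefixFiltration n))
      fun _ _ ↦ prefixFiltration.mono
  have hpreimage : ∀ n {t : Set (Fin n → α)}, MeasurableSet t →
      μ (truncate n ⁻¹' t) = ν (truncate n ⁻¹' t) := by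
    intro n t ht
    rw [← Measure.map_apply (measurable_truncate n) ht, h,
      Measure.map_apply (measurable_truncate n) ht]
  refine ext_of_generate_finite _ hgen hpi ?_ (by simpa using hpreimage 0 MeasurableSet.univ)
  rintro _ ⟨n, t, ht, rfl⟩
  exact hpreimage n ht

end Sequences

section FiberAverage

variable {Ω β : Type*} {mΩ : MeasurableSpace Ω}

noncomputable def fiberAverage (μ : Measure Ω) (π : Ω → β) (f : Ω → ℝ) (x : Ω) : ℝ :=
  (μ.real (π ⁻¹' {π x}))⁻¹ * ∫ y in π ⁻¹' {π x}, f y ∂μ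

lemma setIntegral_fiberAverage_fiber [MeasurableSpace β] [MeasurableSingletonClass β]
    {μ : Measure Ω} [IsFiniteMeasure μ] {π : Ω → β} (hπ : Measurable π) (f : Ω → ℝ) (b : β) :
    ∫ x in π ⁻¹' {b}, fiberAverage μ π f x ∂μ = ∫ x in π ⁻¹' {b}, f x ∂μ := by
  have hconst : Set.EqOn (fiberAverage μ π f)
      (fun _ => (μ.real (π ⁻¹' {b}))⁻¹ * ∫ y in π ⁻¹' {b}, f y ∂μ) (π ⁻¹' {b}) := by
    intro x hx
    simp only [fiberAverage, Set.mem_singleton_iff.1 hx]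
  rw [setIntegral_congr_fun (hπ (measurableSet_singleton b)) hconst, setIntegral_const,
    smul_eq_mul, ← mul_assoc]
  -- on a null fiber `(μ.real _)⁻¹ = 0`, but then the set integral of `f` vanishes as well
  rcases eq_or_ne (μ.real (π ⁻¹' {b})) 0 with h0 | h0
  · rw [setIntegral_measure_zero _ ((measureReal_eq_zero_iff).1 h0), mul_zero]
  · rw [mul_inv_cancel₀ h0, one_mul]

lemma fiberAverage_ae_eq_condExp [MeasurableSpace β] [Finite β] [MeasurableSingletonClass β]
    {μ : Measure Ω} [IsFiniteMeasure μ] {π : Ω → β} (hπ : Measurable π) {f : Ω → ℝ}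
    (hf : Integrable f μ) :
    fiberAverage μ π f =ᵐ[μ] μ[f | MeasurableSpace.comap π inferInstance] := by
  set F : β → ℝ := fun b => (μ.real (π ⁻¹' {b}))⁻¹ * ∫ y in π ⁻¹' {b}, f y ∂μ
  have hF : fiberAverage μ π f = F ∘ π := rfl
  have hint : Integrable (fiberAverage μ π f) μ := by
    rw [hF, ← integrable_map_measure (measurable_of_countable F).aestronglyMeasurable
      hπ.aemeasurable]
    exact Integrable.of_finite
  refine ae_eq_condExp_of_forall_setIntegral_eq hπ.comap_le hf (fun _ _ _ => hint.integrableOn)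
    ?_ ?_
  · rintro _ ⟨t, -, rfl⟩ -
    have hunion : π ⁻¹' t = ⋃ b ∈ t.toFinite.toFinset, π ⁻¹' {b} := by
      ext x
      simp
    have hdisj : (t.toFinite.toFinset : Set β).Pairwise
        (Function.onFun Disjoint fun b => π ⁻¹' {b}) :=
      fun b _ c _ hbc => (Set.disjoint_singleton.2 hbc).preimage π
    have hmeas : ∀ b ∈ t.toFinite.toFinset, MeasurableSet (π ⁻¹' {b}) :=
      fun b _ => hπ (measurableSet_singleton b)
    rw [hunion, integral_biUnion_finset _ hmeas hdisj fun _ _ => hint.integrableOn,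
      integral_biUnion_finset _ hmeas hdisj fun _ _ => hf.integrableOn]
    exact Finset.sum_congr rfl fun b _ => setIntegral_fiberAverage_fiber hπ f b
  · rw [hF]
    exact ((measurable_of_countable F).comp (comap_measurable π)).aestronglyMeasurable

end FiberAverage

lemma integral_abs_sub_eq_toReal_eLpNorm_one {Ω : Type*} {mΩ : MeasurableSpace Ω}
    {μ : Measure Ω} {g h : Ω → ℝ} (hgh : AEStronglyMeasurable (g - h) μ) :
    ∫ x, |g x - h x| ∂μ = (eLpNorm (g - h) 1 μ).toReal := by
  simp_rw [eLpNorm_one_eq_lintegral_enorm, ← integral_norm_eq_lintegral_enorm hgh,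
    Real.norm_eq_abs, Pi.sub_apply]

lemma tendsto_integral_abs_condExp_sub {Ω : Type*} {mΩ : MeasurableSpace Ω} {μ : Measure Ω}
    [IsFiniteMeasure μ] {ℱ : Filtration ℕ mΩ} (hℱ : ⨆ n, ℱ n = mΩ) {f : Ω → ℝ}
    (hf : Integrable f μ) :
    Tendsto (fun n => ∫ x, |μ[f | ℱ n] x - f x| ∂μ) atTop (𝓝 0) := by
  set f' := hf.aestronglyMeasurable.mk f
  have hff' : f =ᵐ[μ] f' := hf.aestronglyMeasurable.ae_eq_mk
  have hlevy := (hf.congr hff').tendsto_eLpNorm_condExp (ℱ := ℱ)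
    (by rw [hℱ]; exact hf.aestronglyMeasurable.stronglyMeasurable_mk)
  refine ((ENNReal.tendsto_toReal ENNReal.zero_ne_top).comp hlevy).congr fun n => ?_
  rw [Function.comp_apply, integral_abs_sub_eq_toReal_eLpNorm_one
    (integrable_condExp.sub hf).aestronglyMeasurable]
  congr 1
  refine eLpNorm_congr_ae ?_
  filter_upwards [condExp_congr_ae (m := ℱ n) hff', hff'] with x h1 h2
  simp [h1, h2]

lemma ae_tendsto_average_infinitePi {α : Type*} [MeasurableSpace α] (μ : Measure α)
    [IsProbabilityMeasure μ] {h : α → ℝ} (hh : Integrable h μ) :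
    ∀ᵐ R ∂(Measure.infinitePi fun _ : ℕ => μ),
      Tendsto (fun N : ℕ => (∑ j ∈ Finset.range N, h (R j)) / N) atTop (𝓝 (∫ x, h x ∂μ)) := by
  set h' := hh.aestronglyMeasurable.mk h
  have hh' : Measurable h' := hh.aestronglyMeasurable.stronglyMeasurable_mk.measurable
  have hhh' : h =ᵐ[μ] h' := hh.aestronglyMeasurable.ae_eq_mk
  have heval := measurePreserving_eval_infinitePi (fun _ : ℕ => μ)
  have hident : ∀ j, IdentDistrib (Function.eval j) (Function.eval 0)
      (Measure.infinitePi fun _ : ℕ => μ) (Measure.infinitePi fun _ : ℕ => μ) := fun j =>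
    ⟨(heval j).aemeasurable, (heval 0).aemeasurable, (heval j).map_eq.trans (heval 0).map_eq.symm⟩
  have hslln := strong_law_ae_real (fun j (R : ℕ → α) => h' (R j))
    ((heval 0).integrable_comp_of_integrable (hh.congr hhh'))
    (fun i j hij => ((iIndepFun_infinitePi (P := fun _ : ℕ => μ) (X := fun _ => h')
      fun _ => hh').indepFun hij))
    (fun j => (hident j).comp hh')
  have hsame : ∀ᵐ R ∂(Measure.infinitePi fun _ : ℕ => μ), ∀ j, h (R j) = h' (R j) :=
    ae_all_iff.2 fun j => (heval j).quasiMeasurePreserving.ae_eq_comp hhh'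
  filter_upwards [hslln, hsame] with R hR hRj
  simp_rw [hRj, integral_congr_ae hhh']
  convert hR using 2
  rw [← integral_map (heval 0).aemeasurable ((heval 0).map_eq ▸ hh'.aestronglyMeasurable),
    (heval 0).map_eq]

section Cantor

noncomputable def fairCoin : Measure Bool := (PMF.uniformOfFintype Bool).toMeasure

instance : IsProbabilityMeasure fairCoin := by
  unfold fairCoin
  infer_instance

lemma fairCoin_singleton (b : Bool) : fairCoin {b} = 2⁻¹ := by
  rw [fairCoin, PMF.toMeasure_apply_singleton _ _ (measurableSet_singleton b),
    PMF.uniformOfFintype_apply, Fintype.card_bool, Nat.cast_ofNat]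

lemma cylinder_ofFn {n : ℕ} (v : Fin n → Bool) :
    cylinder (List.ofFn v) = truncate n ⁻¹' {v} := by
  ext x
  simp only [_root_.cylinder, Set.mem_preimage, Set.mem_singleton_iff, funext_iff, truncate]
  exact ⟨fun h j => by simpa using h j (by simp),
    fun h i hi => by simpa using h ⟨i, by simpa using hi⟩⟩

lemma cylinder_eq_preimage_truncate (p : List Bool) :
    cylinder p = truncate p.length ⁻¹' {p.get} := by
  conv_lhs => rw [← List.ofFn_get p]
  exact cylinder_ofFn p.get

lemma measurableSet_cylinder (p : List Bool) : MeasurableSet (cylinder p) := by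
  rw [cylinder_eq_preimage_truncate]
  exact measurable_truncate _ (measurableSet_singleton _)

lemma cylinder_append (p q : List Bool) :
    cylinder (p ++ q) = cylinder p ∩ shift p.length ⁻¹' cylinder q := by
  ext x
  simp only [_root_.cylinder, Set.mem_inter_iff, Set.mem_preimage, Set.mem_ofPred_eq, shift,
    List.length_append, List.get_eq_getElem]
  constructor
  · intro h
    exact ⟨fun i hi => by simpa [List.getElem_append_left hi] using h i (by omega),
      fun i hi => by simpa [List.getElem_append_right] using h (i + p.length) (by omega)⟩
  · rintro ⟨hp, hq⟩ i hi
    by_cases hip : i < p.length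
    · simpa [List.getElem_append_left hip] using hp i hip
    · simpa [List.getElem_append_right (Nat.le_of_not_lt hip),
        Nat.sub_add_cancel (Nat.le_of_not_lt hip)] using hq (i - p.length) (by omega)

@[fun_prop]
lemma measurable_concatSeq (p : List Bool) : Measurable (concatSeq p) := by
  refine measurable_pi_lambda _ fun n => ?_
  unfold concatSeq
  split_ifs
  exacts [measurable_const, measurable_pi_apply _]

lemma concatSeq_shift {p : List Bool} {x : ℕ → Bool} (hx : x ∈ cylinder p) :
    concatSeq p (shift p.length x) = x := by
  funext n
  unfold concatSeq shift
  split_ifs with h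
  · exact (hx n h).symm
  · rw [Nat.sub_add_cancel (Nat.le_of_not_lt h)]

lemma MeasureTheory.Measure.ext_of_cylinder {μ ν : Measure (ℕ → Bool)} [IsFiniteMeasure μ]
    (h : ∀ p, μ (_root_.cylinder p) = ν (_root_.cylinder p)) : μ = ν :=
  Measure.ext_of_map_truncate fun n => Measure.ext_iff_singleton.2 fun v => by
    rw [Measure.map_apply (measurable_truncate n) (measurableSet_singleton v),
      Measure.map_apply (measurable_truncate n) (measurableSet_singleton v), ← cylinder_ofFn, h]

lemma infinitePi_fairCoin_cylinder (p : List Bool) :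
    Measure.infinitePi (fun _ => fairCoin) (cylinder p) = 2⁻¹ ^ p.length := by
  rw [cylinder_eq_preimage_truncate, ← Measure.map_apply (measurable_truncate _)
    (measurableSet_singleton _),
    show truncate p.length = fun x (j : Fin p.length) => x j from rfl,
    Measure.map_infinitePi_infinitePi_of_inj Fin.val_injective, Measure.infinitePi_eq_pi,
    Measure.pi_singleton]
  simp [fairCoin_singleton]

namespace IsFairCoin

variable {μ : Measure (ℕ → Bool)}

lemma eq_infinitePi_fairCoin (hμ : IsFairCoin μ) : μ = Measure.infinitePi fun _ => fairCoin :=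
  have := hμ.1
  Measure.ext_of_cylinder fun p => by rw [hμ.2, infinitePi_fairCoin_cylinder]

lemma map_unpack (hμ : IsFairCoin μ) : μ.map unpack = Measure.infinitePi fun _ => μ := by
  have hunpack : unpack = MeasurableEquiv.curry ℕ ℕ Bool ∘
      fun (x : ℕ → Bool) (jn : ℕ × ℕ) => x (Nat.pair jn.1 jn.2) := rfl
  have hpair : Function.Injective fun jn : ℕ × ℕ => Nat.pair jn.1 jn.2 :=
    fun a b h => Prod.ext (Nat.pair_eq_pair.1 h).1 (Nat.pair_eq_pair.1 h).2
  rw [hunpack, ← Measure.map_map (by fun_prop) (by fun_prop), hμ.eq_infinitePi_fairCoin,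
    Measure.map_infinitePi_infinitePi_of_inj hpair,
    Measure.infinitePi_map_curry (fun _ _ => fairCoin)]

lemma map_shift_restrict_cylinder (hμ : IsFairCoin μ) (p : List Bool) :
    (μ.restrict (cylinder p)).map (shift p.length) = (2⁻¹ : ENNReal) ^ p.length • μ := by
  have := hμ.1
  refine Measure.ext_of_cylinder fun q => ?_
  rw [Measure.map_apply (measurable_shift _) (measurableSet_cylinder q),
    Measure.restrict_apply (measurable_shift _ (measurableSet_cylinder q)), Set.inter_comm,
    ← cylinder_append, Measure.smul_apply, hμ.2, hμ.2, List.length_append, pow_add, smul_eq_mul]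

lemma map_concatSeq (hμ : IsFairCoin μ) (p : List Bool) :
    μ.map (concatSeq p) = (2 : ENNReal) ^ p.length • μ.restrict (cylinder p) := by
  have hid : μ.restrict (cylinder p) =
      (μ.restrict (cylinder p)).map (concatSeq p ∘ shift p.length) := by
    conv_lhs => rw [← Measure.map_id (μ := μ.restrict (cylinder p))]
    refine Measure.map_congr ?_
    filter_upwards [ae_restrict_mem (measurableSet_cylinder p)] with x hx
    exact (concatSeq_shift hx).symm
  rw [hid, ← Measure.map_map (measurable_concatSeq p) (measurable_shift _),
    hμ.map_shift_restrict_cylinder, Measure.map_smul, smul_smul, ← mul_pow,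
    ENNReal.mul_inv_cancel two_ne_zero ENNReal.ofNat_ne_top, one_pow, one_smul]

variable {f : (ℕ → Bool) → ℝ}

lemma integrable_map_concatSeq (hμ : IsFairCoin μ) (hf : Integrable f μ) (p : List Bool) :
    Integrable f (μ.map (concatSeq p)) := by
  have := hμ.1
  rw [hμ.map_concatSeq]
  exact hf.integrableOn.smul_measure (by simp)

lemma integrable_comp_concatSeq (hμ : IsFairCoin μ) (hf : Integrable f μ) (p : List Bool) :
    Integrable (fun y => f (concatSeq p y)) μ :=
  (integrable_map_measure (hμ.integrable_map_concatSeq hf p).aestronglyMeasurable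
    (measurable_concatSeq p).aemeasurable).1 (hμ.integrable_map_concatSeq hf p)

lemma integral_comp_concatSeq (hμ : IsFairCoin μ) (hf : Integrable f μ) (p : List Bool) :
    ∫ y, f (concatSeq p y) ∂μ = 2 ^ p.length * ∫ y in cylinder p, f y ∂μ := by
  rw [← integral_map (measurable_concatSeq p).aemeasurable
    (hμ.integrable_map_concatSeq hf p).aestronglyMeasurable, hμ.map_concatSeq,
    integral_smul_measure, ENNReal.toReal_pow, ENNReal.toReal_ofNat, smul_eq_mul]

lemma ae_tendsto_average_concatSeq (hμ : IsFairCoin μ) (hf : Integrable f μ) :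
    ∀ᵐ R ∂(μ.map unpack), ∀ p : List Bool,
      Tendsto (fun N : ℕ => (∑ j ∈ Finset.range N, f (concatSeq p (R j))) / N) atTop
        (𝓝 ((2 : ℝ) ^ p.length * ∫ y in cylinder p, f y ∂μ)) := by
  have := hμ.1
  rw [hμ.map_unpack, ae_all_iff]
  intro p
  rw [← hμ.integral_comp_concatSeq hf p]
  exact ae_tendsto_average_infinitePi μ (hμ.integrable_comp_concatSeq hf p)

lemma fiberAverage_truncate (hμ : IsFairCoin μ) (f : (ℕ → Bool) → ℝ) (n : ℕ) (x : ℕ → Bool) :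
    fiberAverage μ (truncate n) f x = 2 ^ n * ∫ y in cylinder (initSeg x n), f y ∂μ := by
  have hfiber : truncate n ⁻¹' {truncate n x} = cylinder (initSeg x n) :=
    (cylinder_ofFn (truncate n x)).symm
  rw [fiberAverage, hfiber, measureReal_def, hμ.2, initSeg, List.length_ofFn, ENNReal.toReal_pow,
    ENNReal.toReal_inv, ENNReal.toReal_ofNat, inv_pow, inv_inv]

end IsFairCoin

end Cantor

theorem stmt7_general (μ : Measure (ℕ → Bool)) (hμ : IsFairCoin μ)
    (f : (ℕ → Bool) → ℝ) (hfint : Integrable f μ) :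
    ∀ᵐ R ∂(μ.map unpack),
      (∀ p : List Bool, Tendsto
        (fun N : ℕ => (∑ j ∈ Finset.range N, f (concatSeq p (R j))) / N) atTop
        (𝓝 ((2 : ℝ) ^ p.length * ∫ y in cylinder p, f y ∂μ))) ∧
      (∀ g : ℕ → (ℕ → Bool) → ℝ,
        (∀ i X, Tendsto
          (fun N : ℕ => (∑ j ∈ Finset.range N, f (concatSeq (initSeg X i) (R j))) / N)
          atTop (𝓝 (g i X))) →
        Tendsto (fun i => ∫ x, |g i x - f x| ∂μ) atTop (𝓝 0)) := by
  have := hμ.1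
  filter_upwards [hμ.ae_tendsto_average_concatSeq hfint] with R hR
  refine ⟨hR, fun g hg => ?_⟩
  have hg_eq : ∀ i, g i = fiberAverage μ (truncate i) f := fun i => funext fun X => by
    rw [hμ.fiberAverage_truncate]
    simpa [initSeg] using tendsto_nhds_unique (hg i X) (hR (initSeg X i))
  refine (tendsto_integral_abs_condExp_sub iSup_prefixFiltration hfint).congr fun i => ?_
  refine integral_congr_ae ?_
  filter_upwards [fiberAverage_ae_eq_condExp (measurable_truncate i) hfint] with x hx
  rw [hg_eq, hx]
  rfl

theorem stmt7 (μ : Measure (ℕ → Bool)) (hμ : IsFairCoin μ)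
    (f : (ℕ → Bool) → ℝ) (hfint : Integrable f μ)
    (M : ℝ) (hbd : ∀ x, |f x| ≤ M) :
    ∀ᵐ R ∂(μ.map unpack),
      (∀ p : List Bool, Tendsto
        (fun N : ℕ => (∑ j ∈ Finset.range N, f (concatSeq p (R j))) / N) atTop
        (𝓝 ((2 : ℝ) ^ p.length * ∫ y in cylinder p, f y ∂μ))) ∧
      (∀ g : ℕ → (ℕ → Bool) → ℝ,
        (∀ i X, Tendsto
          (fun N : ℕ => (∑ j ∈ Finset.range N, f (concatSeq (initSeg X i) (R j))) / N)
          atTop (𝓝 (g i X))) →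
        Tendsto (fun i => ∫ x, |g i x - f x| ∂μ) atTop (𝓝 0)) :=
  stmt7_general μ hμ f hfint
end
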